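/- arXiv:math/0512351 — 2 statements merged into one kernel-verified Lean document; each statement's English description precedes it below -/
import Mathlib

section
/- The bilinear bracket defined on the space with basis {L_{i,j}, C : i,j ∈ ℤ} by [L_{i,j}, L_{k,l}] = ((j+1)k - i(l+1)) L_{i+k, j+l} + i δ_{i,-k} δ_{j+l,-2} C and [C, L_{i,j}] = 0 satisfies the Jacobi identity, i.e. [[x,y],z] + [[y,z],x] + [[z,x],y] = 0 on basis elements. -/
/-- The underlying space of the Block Lie algebra: finitely supported
coefficients on the basis `{L_{i,j} : i,j ∈ ℤ}` together with a coefficient of `C`. -/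
abbrev BlockSpace (F : Type*) [Field F] := (ℤ × ℤ →₀ F) × F

/-- The basis vector `L_{i,j}`. -/
noncomputable def Lb (F : Type*) [Field F] (i j : ℤ) : BlockSpace F :=
  (Finsupp.single (i, j) 1, 0)

/-- The central basis vector `C`. -/
def Cb (F : Type*) [Field F] : BlockSpace F := (0, 1)

/-- The bracket on basis elements:
`[L_{i,j}, L_{k,l}] = ((j+1)k - i(l+1)) L_{i+k,j+l} + i δ_{i,-k} δ_{j+l,-2} C`. -/
noncomputable def bb (F : Type*) [Field F] (p q : ℤ × ℤ) : BlockSpace F :=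
  ((((p.2 + 1) * q.1 - p.1 * (q.2 + 1) : ℤ) : F) • Finsupp.single (p.1 + q.1, p.2 + q.2) 1,
   if p.1 = -q.1 ∧ p.2 + q.2 = -2 then ((p.1 : F)) else 0)

/-- The bilinear extension of the bracket (note `C` is central: the `C`-component
of an element acts trivially). -/
noncomputable def br (F : Type*) [Field F] (x y : BlockSpace F) : BlockSpace F :=
  x.1.sum fun p a => y.1.sum fun q b => (a * b) • bb F p q

lemma br_zero_left (F : Type*) [Field F] (y : BlockSpace F) : br F 0 y = 0 := by
  simp [br]

lemma br_zero_right (F : Type*) [Field F] (x : BlockSpace F) : br F x 0 = 0 := by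
  simp [br]

lemma br_C_left (F : Type*) [Field F] (y : BlockSpace F) : br F (Cb F) y = 0 := by
  simp [br, Cb]

lemma br_C_right (F : Type*) [Field F] (x : BlockSpace F) : br F x (Cb F) = 0 := by
  simp [br, Cb]

lemma br_Lb_Lb (F : Type*) [Field F] (i j k l : ℤ) :
    br F (Lb F i j) (Lb F k l) = bb F (i, j) (k, l) := by
  simp [br, Lb, Finsupp.sum_single_index]

lemma br_bb_Lb (F : Type*) [Field F] (p q : ℤ × ℤ) (m n : ℤ) :
    br F (bb F p q) (Lb F m n)
      = (((p.2 + 1) * q.1 - p.1 * (q.2 + 1) : ℤ) : F) • bb F (p.1 + q.1, p.2 + q.2) (m, n) := by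
  have h1 : (bb F p q).1
      = Finsupp.single (p.1 + q.1, p.2 + q.2) (((p.2 + 1) * q.1 - p.1 * (q.2 + 1) : ℤ) : F) := by
    rw [bb, Finsupp.smul_single, smul_eq_mul, mul_one]
  rw [br, h1, Finsupp.sum_single_index (by simp), Lb]
  dsimp only
  rw [Finsupp.sum_single_index (by simp), mul_one]

/-- The bracket of the Block Lie algebra satisfies the Jacobi identity on basis
elements, i.e. on all elements of `{L_{i,j} : i,j ∈ ℤ} ∪ {C}`. -/
theorem block_jacobi_on_basis (F : Type*) [Field F]
    (x y z : BlockSpace F)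
    (hx : (∃ i j : ℤ, x = Lb F i j) ∨ x = Cb F)
    (hy : (∃ i j : ℤ, y = Lb F i j) ∨ y = Cb F)
    (hz : (∃ i j : ℤ, z = Lb F i j) ∨ z = Cb F) :
    br F (br F x y) z + br F (br F y z) x + br F (br F z x) y = 0 := by
  rcases hx with ⟨i, j, rfl⟩ | rfl
  · rcases hy with ⟨k, l, rfl⟩ | rfl
    · rcases hz with ⟨m, n, rfl⟩ | rfl
      · -- all basis L's
        rw [br_Lb_Lb, br_Lb_Lb, br_Lb_Lb, br_bb_Lb, br_bb_Lb, br_bb_Lb]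
        simp only [smul_smul]
        apply Prod.ext
        · simp only [bb, Prod.smul_mk, Prod.fst_add, Prod.fst_zero, smul_smul,
            Finsupp.smul_single', mul_one]
          have e2 : ((k + m + i : ℤ), (l + n + j : ℤ)) = ((i + k + m : ℤ), (j + l + n : ℤ)) := by
            simp only [Prod.mk.injEq]; omega
          have e3 : ((m + i + k : ℤ), (n + j + l : ℤ)) = ((i + k + m : ℤ), (j + l + n : ℤ)) := by
            simp only [Prod.mk.injEq]; omega
          rw [e2, e3, ← Finsupp.single_add, ← Finsupp.single_add]
          convert Finsupp.single_zero _
          · rfl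
          push_cast
          ring
        · simp only [bb, Prod.smul_mk, Prod.snd_add, Prod.snd_zero, smul_eq_mul]
          by_cases hc : i + k + m = 0 ∧ j + l + n = -2
          · rw [if_pos (by omega : (i + k = -m ∧ (j + l) + n = -2)),
              if_pos (by omega : (k + m = -i ∧ (l + n) + j = -2)),
              if_pos (by omega : (m + i = -k ∧ (n + j) + l = -2))]
            have hm : m = -i - k := by omega
            subst hm
            have hn : n = -2 - j - l := by omega
            subst hn
            push_cast
            ring
          · rw [if_neg (by omega), if_neg (by omega), if_neg (by omega)]
            simp
      · simp [br_C_left, br_C_right, br_zero_left, br_zero_right]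
    · simp [br_C_left, br_C_right, br_zero_left, br_zero_right]
  · simp [br_C_left, br_C_right, br_zero_left, br_zero_right]
end

section
/- The linear map sending L_{i,j} ↦ x^i t^{j+1} and C ↦ C is a Lie algebra isomorphism from the abstract Block type Lie algebra B(ℤ) onto the Lie algebra F[x^{±1}, t^{±1}] ⊕ F·C with bracket [x^i f(t), x^j g(t)] = x^{i+j}(j f' g - i f g') + i δ_{i,-j} Res_t(t^{-1} f g) C. -/
/-- Bracket on the monomials `x^i t^m` of the Laurent realization:
`[x^i t^m, x^j t^n] = (j m - i n) x^{i+j} t^{m+n-1} + i δ_{i,-j} δ_{m+n,0} C`,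
i.e. `[x^i f, x^j g] = x^{i+j}(j f' g - i f g') + i δ_{i,-j} Res_t(t^{-1} f g) C`. -/
noncomputable def lmb (F : Type*) [Field F] (p q : ℤ × ℤ) : BlockSpace F :=
  (((q.1 * p.2 - p.1 * q.2 : ℤ) : F) • Finsupp.single (p.1 + q.1, p.2 + q.2 - 1) 1,
   if p.1 = -q.1 ∧ p.2 + q.2 = 0 then ((p.1 : F)) else 0)

/-- Bilinear extension of the bracket of the Laurent realization. -/
noncomputable def lbr (F : Type*) [Field F] (x y : BlockSpace F) : BlockSpace F :=
  x.1.sum fun p a => y.1.sum fun q b => (a * b) • lmb F p q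

/-- The linear map sending `L_{i,j} ↦ x^i t^{j+1}` and `C ↦ C`. -/
noncomputable def real (F : Type*) [Field F] : BlockSpace F →ₗ[F] BlockSpace F :=
  (Finsupp.lmapDomain F F (fun p : ℤ × ℤ => (p.1, p.2 + 1))).prodMap
    (LinearMap.id : F →ₗ[F] F)

private def fmap : ℤ × ℤ → ℤ × ℤ := fun p => (p.1, p.2 + 1)

private lemma fmap_inj : Function.Injective fmap := by
  intro a b h
  simp only [fmap, Prod.mk.injEq] at h
  exact Prod.ext h.1 (by omega)

private lemma fmap_surj : Function.Surjective fmap := by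
  intro b
  exact ⟨(b.1, b.2 - 1), by simp [fmap]⟩

private lemma real_apply (F : Type*) [Field F] (x : BlockSpace F) :
    real F x = (Finsupp.mapDomain fmap x.1, x.2) := rfl

private lemma real_bb (F : Type*) [Field F] (p q : ℤ × ℤ) :
    real F (bb F p q) = lmb F (fmap p) (fmap q) := by
  rw [real_apply]
  unfold bb lmb fmap
  refine Prod.ext ?_ ?_
  · simp only [Finsupp.mapDomain_smul, Finsupp.mapDomain_single]
    have h1 : ((q.1 * (p.2 + 1) - p.1 * (q.2 + 1) : ℤ) : F)
        = (((p.2 + 1) * q.1 - p.1 * (q.2 + 1) : ℤ) : F) := by push_cast; ring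
    have h2 : (p.1 + q.1, p.2 + 1 + (q.2 + 1) - 1) = (p.1 + q.1, p.2 + q.2 + 1) := by
      refine Prod.ext rfl (by omega)
    rw [h1, h2]
  · simp only
    congr 1
    simp only [eq_iff_iff]
    constructor <;> rintro ⟨h, h2⟩ <;> exact ⟨h, by omega⟩

/-- The linear map `L_{i,j} ↦ x^i t^{j+1}`, `C ↦ C` is a Lie algebra
isomorphism from the abstract Block type Lie algebra `B(ℤ)` onto the Lie
algebra `F[x^{±1},t^{±1}] ⊕ F·C` with bracket
`[x^i f, x^j g] = x^{i+j}(j f' g - i f g') + i δ_{i,-j} Res_t(t^{-1} f g) C`. -/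
theorem realization_isomorphism (F : Type*) [Field F] [CharZero F] :
    Function.Bijective (real F) ∧
    ∀ x y : BlockSpace F, real F (br F x y) = lbr F (real F x) (real F y) := by
  constructor
  · constructor
    · intro a b h
      rw [real_apply, real_apply, Prod.mk.injEq] at h
      exact Prod.ext (Finsupp.mapDomain_injective fmap_inj h.1) h.2
    · intro b
      refine ⟨(Finsupp.mapDomain (fun p : ℤ × ℤ => (p.1, p.2 - 1)) b.1, b.2), ?_⟩
      rw [real_apply]
      refine Prod.ext ?_ rfl
      rw [← Finsupp.mapDomain_comp]
      have : fmap ∘ (fun p : ℤ × ℤ => (p.1, p.2 - 1)) = id := by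
        funext p; simp [fmap]
      rw [this, Finsupp.mapDomain_id]
  · intro x y
    unfold br lbr
    rw [map_finsuppSum]
    rw [real_apply (x := x), real_apply (x := y)]
    simp only
    rw [Finsupp.sum_mapDomain_index_inj fmap_inj]
    refine Finsupp.sum_congr fun p _ => ?_
    rw [map_finsuppSum, Finsupp.sum_mapDomain_index_inj fmap_inj]
    refine Finsupp.sum_congr fun q _ => ?_
    rw [map_smul, real_bb]
end
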